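/- arXiv:2205.07391 — 2 statements merged into one kernel-verified Lean document; each statement's English description precedes it below -/
import Mathlib

section
/- The nonuniform μ-dichotomy spectrum Σ^{ND}_μ(A) of x' = A(t)x, A(t) ∈ Mₙ(ℝ), is the union of at most n disjoint closed intervals of ℝ: there is m ∈ {0,…,n} with Σ^{ND}_μ(A) = ∅ if m = 0; Σ^{ND}_μ(A) equal to ℝ, (−∞,b₁], [a₁,b₁], or [a₁,∞) if m = 1; and Σ^{ND}_μ(A) = I₁ ∪ [a₂,b₂] ∪ … ∪ [a_{m−1},b_{m−1}] ∪ I_m with I₁ = [a₁,b₁] or (−∞,b₁], I_m = [a_m,b_m] or [a_m,∞), and aᵢ ≤ bᵢ < a_{i+1}, if 1 < m ≤ n. -/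
/-!
For `γ` in the resolvent with dichotomy projections `P`, the range of `P 0` consists of the
initial values whose `Φ_γ`-orbit stays bounded for `t ≥ 0`, and its kernel of those bounded for
`t ≤ 0`. Both spaces depend only on `γ`, monotonically, so two resolvent points with the same
stable dimension `d γ = dim (range (P 0))` share their projections, and the stable estimate of one
together with the unstable estimate of the other gives a dichotomy at every point in between.
Likewise `d γ = 0` forces `P = 0` and `d γ = n` forces `P = 1`, after which the resolvent extends
to the left, resp. right. The resolvent is open and `d` is monotone with values in `{0, …, n}`, so
grouping spectral points `x` by the largest value of `d` on resolvent points below `x` yields at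
most `n` ordered closed intervals.
-/

open Filter Topology

noncomputable section

/-- Bounded linear operators on ℝⁿ. -/
abbrev Op (n : ℕ) := EuclideanSpace ℝ (Fin n) →L[ℝ] EuclideanSpace ℝ (Fin n)

/-- μ is a growth rate: strictly increasing, positive, μ(0)=1, μ→∞ at +∞, μ→0 at -∞. -/
def GrowthRate (μ : ℝ → ℝ) : Prop :=
  StrictMono μ ∧ (∀ t, 0 < μ t) ∧ μ 0 = 1 ∧
    Tendsto μ atTop atTop ∧ Tendsto μ atBot (nhds 0)

/-- The evolution operator Ψ admits a nonuniform μ-dichotomy with invariant projections P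
and constants K, α, β, θ, ν. -/
def NuDWith {n : ℕ} (μ : ℝ → ℝ) (Ψ : ℝ → ℝ → Op n) (P : ℝ → Op n)
    (K α β θ ν : ℝ) : Prop :=
  (∀ t, P t ∘L P t = P t) ∧
  (∀ t s, P t ∘L Ψ t s = Ψ t s ∘L P s) ∧
  1 ≤ K ∧ α < 0 ∧ 0 < β ∧ 0 ≤ θ ∧ 0 ≤ ν ∧ α + θ < 0 ∧ 0 < β - ν ∧
  (∀ t s, s ≤ t → ‖Ψ t s ∘L P s‖ ≤ K * (μ t / μ s) ^ α * μ s ^ (Real.sign s * θ)) ∧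
  (∀ t s, t ≤ s → ‖Ψ t s ∘L (1 - P s)‖ ≤ K * (μ t / μ s) ^ β * μ s ^ (Real.sign s * ν))

/-- The evolution operator Ψ admits a nonuniform μ-dichotomy. -/
def NuD {n : ℕ} (μ : ℝ → ℝ) (Ψ : ℝ → ℝ → Op n) : Prop :=
  ∃ P K α β θ ν, NuDWith μ Ψ P K α β θ ν

/-- The evolution operator Φ_γ(t,s) = (μ(t)/μ(s))^{-γ} Φ(t,s) of the shifted system. -/
def shiftEvo {n : ℕ} (μ : ℝ → ℝ) (γ : ℝ) (Φ : ℝ → ℝ → Op n) : ℝ → ℝ → Op n :=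
  fun t s => (μ t / μ s) ^ (-γ) • Φ t s

/-- The nonuniform μ-resolvent set. -/
def resolventND {n : ℕ} (μ : ℝ → ℝ) (Φ : ℝ → ℝ → Op n) : Set ℝ :=
  {γ | NuD μ (shiftEvo μ γ Φ)}

/-- The nonuniform μ-dichotomy spectrum. -/
def spectrumND {n : ℕ} (μ : ℝ → ℝ) (Φ : ℝ → ℝ → Op n) : Set ℝ :=
  (resolventND μ Φ)ᶜ

/-- Φ is the evolution operator of x' = A(t)x. -/
def IsEvolutionOp {n : ℕ} (A : ℝ → Op n) (Φ : ℝ → ℝ → Op n) : Prop :=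
  (∀ s, Φ s s = 1) ∧ (∀ t τ s, Φ t τ ∘L Φ τ s = Φ t s) ∧
    (∀ s t, HasDerivAt (fun r => Φ r s) (A t ∘L Φ t s) t)

/-- U_γ = {(s,ξ) : sup_{t ≥ 0} ‖Φ(t,s)ξ‖ μ(t)^{-γ} < ∞}. -/
def Uset {n : ℕ} (μ : ℝ → ℝ) (Φ : ℝ → ℝ → Op n) (γ : ℝ) : Set (ℝ × EuclideanSpace ℝ (Fin n)) :=
  {p | ∃ C, ∀ t, 0 ≤ t → ‖Φ t p.1 p.2‖ * μ t ^ (-γ) ≤ C}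

/-- V_γ = {(s,ξ) : sup_{t ≤ 0} ‖Φ(t,s)ξ‖ μ(t)^{-γ} < ∞}. -/
def Vset {n : ℕ} (μ : ℝ → ℝ) (Φ : ℝ → ℝ → Op n) (γ : ℝ) : Set (ℝ × EuclideanSpace ℝ (Fin n)) :=
  {p | ∃ C, ∀ t, t ≤ 0 → ‖Φ t p.1 p.2‖ * μ t ^ (-γ) ≤ C}

namespace GrowthRate

variable {μ : ℝ → ℝ}

lemma pos (hgr : GrowthRate μ) (t : ℝ) : 0 < μ t := hgr.2.1 t

lemma one_le_div (hgr : GrowthRate μ) {t s : ℝ} (hst : s ≤ t) : 1 ≤ μ t / μ s :=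
  (_root_.one_le_div (hgr.pos s)).2 (hgr.1.monotone hst)

lemma div_le_one (hgr : GrowthRate μ) {t s : ℝ} (hts : t ≤ s) : μ t / μ s ≤ 1 :=
  (_root_.div_le_one (hgr.pos s)).2 (hgr.1.monotone hts)

lemma div_rpow_mul_rpow (hgr : GrowthRate μ) (t a b : ℝ) :
    (μ 0 / μ t) ^ a * μ t ^ b = μ t ^ (b - a) := by
  have ht := hgr.pos t
  rw [hgr.2.2.1, one_div, Real.inv_rpow ht.le, ← Real.rpow_neg ht.le, ← Real.rpow_add ht,
    neg_add_eq_sub]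

lemma tendsto_rpow_atTop (hgr : GrowthRate μ) {c : ℝ} (hc : c < 0) :
    Tendsto (fun t => μ t ^ c) atTop (𝓝 0) := by
  obtain ⟨-, -, -, hμ, -⟩ := hgr
  simpa [Function.comp_def] using (tendsto_rpow_neg_atTop (neg_pos.2 hc)).comp hμ

lemma tendsto_rpow_atBot (hgr : GrowthRate μ) {c : ℝ} (hc : 0 < c) :
    Tendsto (fun t => μ t ^ c) atBot (𝓝 0) := by
  obtain ⟨-, -, -, -, hμ⟩ := hgr
  simpa [Real.zero_rpow hc.ne', Function.comp_def] using
    (Real.continuousAt_rpow_const 0 c (Or.inr hc.le)).tendsto.comp hμ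

end GrowthRate

section BoundedOrbits

variable {E F : Type*} [NormedAddCommGroup E] [NormedSpace ℝ E]
  [NormedAddCommGroup F] [NormedSpace ℝ F] {T : Set ℝ} {L L₁ L₂ : ℝ → E →L[ℝ] F}

def boundedOrbits (T : Set ℝ) (L : ℝ → E →L[ℝ] F) : Submodule ℝ E where
  carrier := {ξ | Memℓp (fun t : T => L t ξ) ⊤}
  add_mem' {a b} (ha : Memℓp (fun t : T => L t a) ⊤) (hb : Memℓp (fun t : T => L t b) ⊤) := by
    show Memℓp (fun t : T => L t (a + b)) ⊤
    simp only [map_add]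
    exact ha.add hb
  zero_mem' := by
    show Memℓp (fun t : T => L t 0) ⊤
    simp only [map_zero]
    exact zero_memℓp
  smul_mem' c ξ (h : Memℓp (fun t : T => L t ξ) ⊤) := by
    show Memℓp (fun t : T => L t (c • ξ)) ⊤
    simp only [map_smul]
    exact h.const_smul c

lemma mem_boundedOrbits {ξ : E} : ξ ∈ boundedOrbits T L ↔ ∃ C, ∀ t ∈ T, ‖L t ξ‖ ≤ C := by
  change Memℓp _ ⊤ ↔ _
  simp [memℓp_infty_iff, bddAbove_def]

lemma boundedOrbits_mono (h : ∀ t ∈ T, ∀ ξ, ‖L₂ t ξ‖ ≤ ‖L₁ t ξ‖) :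
    boundedOrbits T L₁ ≤ boundedOrbits T L₂ := fun ξ hξ => by
  obtain ⟨C, hC⟩ := mem_boundedOrbits.1 hξ
  exact mem_boundedOrbits.2 ⟨C, fun t ht => (h t ht ξ).trans (hC t ht)⟩

lemma range_le_boundedOrbits {Q : E →L[ℝ] E} {C : ℝ} (h : ∀ t ∈ T, ‖L t ∘L Q‖ ≤ C) :
    Q.range ≤ boundedOrbits T L := by
  rintro _ ⟨x, rfl⟩
  refine mem_boundedOrbits.2 ⟨C * ‖x‖, fun t ht => ?_⟩
  exact ((L t ∘L Q).le_opNorm x).trans (mul_le_mul_of_nonneg_right (h t ht) (norm_nonneg x))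

end BoundedOrbits

section EvolutionFamily

variable {n : ℕ} {μ : ℝ → ℝ} {Φ Ψ : ℝ → ℝ → Op n} {P Q : ℝ → Op n}

def IsEvolutionFamily (Ψ : ℝ → ℝ → Op n) : Prop :=
  (∀ s, Ψ s s = 1) ∧ ∀ t τ s, Ψ t τ ∘L Ψ τ s = Ψ t s

def IsInvariantFamily (Ψ : ℝ → ℝ → Op n) (P : ℝ → Op n) : Prop :=
  ∀ t s, P t ∘L Ψ t s = Ψ t s ∘L P s

lemma IsEvolutionOp.isEvolutionFamily {A : ℝ → Op n} (h : IsEvolutionOp A Φ) :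
    IsEvolutionFamily Φ :=
  ⟨h.1, h.2.1⟩

lemma shiftEvo_eq_smul (hμ : ∀ t, 0 < μ t) (γ₁ γ t s : ℝ) :
    shiftEvo μ γ Φ t s = (μ t / μ s) ^ (γ₁ - γ) • shiftEvo μ γ₁ Φ t s := by
  rw [shiftEvo, shiftEvo, smul_smul, ← Real.rpow_add (div_pos (hμ t) (hμ s))]
  congr 2
  ring

lemma IsEvolutionFamily.shiftEvo (hμ : ∀ t, 0 < μ t) (hΦ : IsEvolutionFamily Φ) (γ : ℝ) :
    IsEvolutionFamily (shiftEvo μ γ Φ) := by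
  refine ⟨fun s => by simp [_root_.shiftEvo, div_self (hμ s).ne', hΦ.1 s], fun t τ s => ?_⟩
  simp only [_root_.shiftEvo, ContinuousLinearMap.smul_comp, ContinuousLinearMap.comp_smul,
    smul_smul, hΦ.2]
  rw [← Real.mul_rpow (div_pos (hμ τ) (hμ s)).le (div_pos (hμ t) (hμ τ)).le, mul_comm,
    div_mul_div_cancel₀ (hμ τ).ne']

lemma isInvariantFamily_shiftEvo_iff (hμ : ∀ t, 0 < μ t) (γ : ℝ) :
    IsInvariantFamily (shiftEvo μ γ Φ) P ↔ IsInvariantFamily Φ P := by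
  refine forall₂_congr fun t s => ?_
  simp only [shiftEvo, ContinuousLinearMap.comp_smul, ContinuousLinearMap.smul_comp]
  exact (smul_right_injective (Op n) (Real.rpow_pos_of_pos (div_pos (hμ t) (hμ s)) _).ne').eq_iff

lemma IsInvariantFamily.one_sub (hP : IsInvariantFamily Ψ P) :
    IsInvariantFamily Ψ (fun t => 1 - P t) := fun t s => by
  rw [ContinuousLinearMap.sub_comp, ContinuousLinearMap.comp_sub, hP t s]
  rfl

lemma IsInvariantFamily.conj (hΨ : IsEvolutionFamily Ψ) (hP : IsInvariantFamily Ψ P) (t s : ℝ) :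
    Ψ s t ∘L P t ∘L Ψ t s = P s := by
  rw [hP t s, ← ContinuousLinearMap.comp_assoc, hΨ.2, hΨ.1]
  exact one_mul (P s)

lemma IsInvariantFamily.eq_of_apply_zero_eq (hΨ : IsEvolutionFamily Ψ)
    (hP : IsInvariantFamily Ψ P) (hQ : IsInvariantFamily Ψ Q) (h0 : P 0 = Q 0) : P = Q :=
  funext fun t => by rw [← hP.conj hΨ 0 t, ← hQ.conj hΨ 0 t, h0]

lemma IsInvariantFamily.apply_eq_zero_of_tendsto (hΨ : IsEvolutionFamily Ψ)
    (hQ : IsInvariantFamily Ψ Q) {l : Filter ℝ} [l.NeBot] {g : ℝ → ℝ}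
    (hg : Tendsto g l (𝓝 0)) (hQg : ∀ᶠ t in l, ‖Ψ 0 t ∘L Q t‖ ≤ g t)
    {ξ : EuclideanSpace ℝ (Fin n)} {C : ℝ} (hξ : ∀ᶠ t in l, ‖Ψ t 0 ξ‖ ≤ C) : Q 0 ξ = 0 := by
  have hle : ∀ᶠ t in l, ‖Q 0 ξ‖ ≤ g t * C := by
    filter_upwards [hQg, hξ] with t hQt hξt
    rw [← hQ.conj hΨ t 0, ← ContinuousLinearMap.comp_assoc]
    exact ((Ψ 0 t ∘L Q t).le_opNorm _).trans
      (mul_le_mul hQt hξt (norm_nonneg _) ((norm_nonneg _).trans hQt))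
  have hlim : Tendsto (fun t => g t * C) l (𝓝 0) := by simpa using hg.mul_const C
  exact norm_le_zero_iff.1 (ge_of_tendsto hlim hle)

end EvolutionFamily

section Dichotomy

variable {n : ℕ} {μ : ℝ → ℝ} {Ψ : ℝ → ℝ → Op n} {P : ℝ → Op n} {K α β θ ν : ℝ}

def stableSubspace (Ψ : ℝ → ℝ → Op n) : Submodule ℝ (EuclideanSpace ℝ (Fin n)) :=
  boundedOrbits (Set.Ici 0) (fun t => Ψ t 0)

def unstableSubspace (Ψ : ℝ → ℝ → Op n) : Submodule ℝ (EuclideanSpace ℝ (Fin n)) :=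
  boundedOrbits (Set.Iic 0) (fun t => Ψ t 0)

def StableBound (μ : ℝ → ℝ) (Ψ : ℝ → ℝ → Op n) (P : ℝ → Op n) (K α θ : ℝ) : Prop :=
  ∀ t s, s ≤ t → ‖Ψ t s ∘L P s‖ ≤ K * (μ t / μ s) ^ α * μ s ^ (Real.sign s * θ)

def UnstableBound (μ : ℝ → ℝ) (Ψ : ℝ → ℝ → Op n) (P : ℝ → Op n) (K β ν : ℝ) : Prop :=
  ∀ t s, t ≤ s → ‖Ψ t s ∘L (1 - P s)‖ ≤ K * (μ t / μ s) ^ β * μ s ^ (Real.sign s * ν)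

lemma StableBound.norm_le_of_nonneg (hgr : GrowthRate μ) (hs : StableBound μ Ψ P K α θ)
    (hK : 0 ≤ K) (hα : α ≤ 0) {t : ℝ} (ht : 0 ≤ t) : ‖Ψ t 0 ∘L P 0‖ ≤ K := by
  have h := hs t 0 ht
  rw [Real.sign_zero, zero_mul, Real.rpow_zero, mul_one] at h
  exact h.trans (mul_le_of_le_one_right hK
    (Real.rpow_le_one_of_one_le_of_nonpos (hgr.one_le_div ht) hα))

lemma UnstableBound.norm_le_of_nonpos (hgr : GrowthRate μ) (hu : UnstableBound μ Ψ P K β ν)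
    (hK : 0 ≤ K) (hβ : 0 ≤ β) {t : ℝ} (ht : t ≤ 0) : ‖Ψ t 0 ∘L (1 - P 0)‖ ≤ K := by
  have h := hu t 0 ht
  rw [Real.sign_zero, zero_mul, Real.rpow_zero, mul_one] at h
  exact h.trans (mul_le_of_le_one_right hK
    (Real.rpow_le_one (div_pos (hgr.pos t) (hgr.pos 0)).le (hgr.div_le_one ht) hβ))

lemma StableBound.norm_le_of_neg (hgr : GrowthRate μ) (hs : StableBound μ Ψ P K α θ)
    {t : ℝ} (ht : t < 0) : ‖Ψ 0 t ∘L P t‖ ≤ K * μ t ^ (-θ - α) := by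
  have h := hs 0 t ht.le
  rwa [Real.sign_of_neg ht, mul_assoc, hgr.div_rpow_mul_rpow, neg_one_mul] at h

lemma UnstableBound.norm_le_of_pos (hgr : GrowthRate μ) (hu : UnstableBound μ Ψ P K β ν)
    {t : ℝ} (ht : 0 < t) : ‖Ψ 0 t ∘L (1 - P t)‖ ≤ K * μ t ^ (ν - β) := by
  have h := hu 0 t ht.le
  rwa [Real.sign_of_pos ht, mul_assoc, hgr.div_rpow_mul_rpow, one_mul] at h

lemma NuDWith.range_eq (hgr : GrowthRate μ) (hΨ : IsEvolutionFamily Ψ)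
    (w : NuDWith μ Ψ P K α β θ ν) : (P 0).range = stableSubspace Ψ := by
  obtain ⟨-, hinv, hK, hα, -, -, -, -, hβν, hs, hu⟩ := w
  refine le_antisymm (range_le_boundedOrbits fun t ht =>
    StableBound.norm_le_of_nonneg hgr hs (by linarith) hα.le ht) fun ξ hξ => ?_
  obtain ⟨C, hC⟩ := mem_boundedOrbits.1 hξ
  have hlim : Tendsto (fun t => K * μ t ^ (ν - β)) atTop (𝓝 0) := by
    simpa using (hgr.tendsto_rpow_atTop (by linarith)).const_mul K
  have hQξ : (1 - P 0) ξ = 0 :=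
    (IsInvariantFamily.one_sub hinv).apply_eq_zero_of_tendsto hΨ hlim
      ((eventually_gt_atTop 0).mono fun t ht => UnstableBound.norm_le_of_pos hgr hu ht)
      ((eventually_ge_atTop 0).mono hC)
  exact ⟨ξ, (sub_eq_zero.1 (by simpa using hQξ)).symm⟩

lemma NuDWith.ker_eq (hgr : GrowthRate μ) (hΨ : IsEvolutionFamily Ψ)
    (w : NuDWith μ Ψ P K α β θ ν) : (P 0).ker = unstableSubspace Ψ := by
  obtain ⟨-, hinv, hK, -, hβ, -, -, hαθ, -, hs, hu⟩ := w
  refine le_antisymm (fun ξ hξ => ?_) fun ξ hξ => ?_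
  · have hξ' : (1 - P 0) ξ = ξ := by simp [show P 0 ξ = 0 from hξ]
    exact range_le_boundedOrbits (fun t ht =>
      UnstableBound.norm_le_of_nonpos hgr hu (by linarith) hβ.le ht) ⟨ξ, hξ'⟩
  obtain ⟨C, hC⟩ := mem_boundedOrbits.1 hξ
  have hlim : Tendsto (fun t => K * μ t ^ (-θ - α)) atBot (𝓝 0) := by
    simpa using (hgr.tendsto_rpow_atBot (by linarith)).const_mul K
  exact IsInvariantFamily.apply_eq_zero_of_tendsto hΨ hinv hlim
    ((eventually_lt_atBot 0).mono fun t ht => StableBound.norm_le_of_neg hgr hs ht)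
    ((eventually_le_atBot 0).mono hC)

end Dichotomy

lemma ContinuousLinearMap.IsIdempotentElem.eq_of_range_le_of_ker_le {R M : Type*} [Ring R]
    [TopologicalSpace M] [AddCommGroup M] [Module R M] {p q : M →L[R] M}
    (hp : IsIdempotentElem p) (hq : IsIdempotentElem q) (hr : q.range ≤ p.range)
    (hk : q.ker ≤ p.ker) : p = q := by
  have hpq : (p : M →ₗ[R] M) ∘ₗ (q : M →ₗ[R] M) = q :=
    (LinearMap.IsIdempotentElem.comp_eq_right_iff
      (ContinuousLinearMap.IsIdempotentElem.toLinearMap hp) _).2 hr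
  have hqp : (p : M →ₗ[R] M) ∘ₗ (q : M →ₗ[R] M) = p :=
    (LinearMap.IsIdempotentElem.comp_eq_left_iff
      (ContinuousLinearMap.IsIdempotentElem.toLinearMap hq) _).2 hk
  exact ContinuousLinearMap.coe_injective (hqp.symm.trans hpq)

section Resolvent

variable {n : ℕ} {μ : ℝ → ℝ} {Φ Ψ : ℝ → ℝ → Op n} {P : ℝ → Op n}
  {γ γ₁ γ₂ K K' α β θ ν : ℝ}

lemma norm_shiftEvo_comp_le (hμ : ∀ t, 0 < μ t) {X : Op n} {t s a w : ℝ} (hw : 0 ≤ w)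
    (hK : K ≤ K') (h : ‖shiftEvo μ γ₁ Φ t s ∘L X‖ ≤ K * (μ t / μ s) ^ a * w) (γ : ℝ) :
    ‖shiftEvo μ γ Φ t s ∘L X‖ ≤ K' * (μ t / μ s) ^ (a + (γ₁ - γ)) * w := by
  have hq := div_pos (hμ t) (hμ s)
  rw [shiftEvo_eq_smul hμ γ₁, ContinuousLinearMap.smul_comp,
    norm_smul, Real.norm_of_nonneg (Real.rpow_nonneg hq.le _)]
  calc _ ≤ (μ t / μ s) ^ (γ₁ - γ) * (K * (μ t / μ s) ^ a * w) :=
        mul_le_mul_of_nonneg_left h (Real.rpow_nonneg hq.le _)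
    _ = K * (μ t / μ s) ^ (a + (γ₁ - γ)) * w := by rw [Real.rpow_add hq]; ring
    _ ≤ _ := by gcongr

lemma StableBound.shift (hμ : ∀ t, 0 < μ t) (hs : StableBound μ (shiftEvo μ γ₁ Φ) P K α θ)
    (hK : K ≤ K') (γ : ℝ) : StableBound μ (shiftEvo μ γ Φ) P K' (α + (γ₁ - γ)) θ :=
  fun t s hst => norm_shiftEvo_comp_le hμ (Real.rpow_nonneg (hμ s).le _) hK (hs t s hst) γ

lemma UnstableBound.shift (hμ : ∀ t, 0 < μ t) (hu : UnstableBound μ (shiftEvo μ γ₂ Φ) P K β ν)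
    (hK : K ≤ K') (γ : ℝ) : UnstableBound μ (shiftEvo μ γ Φ) P K' (β + (γ₂ - γ)) ν :=
  fun t s hts => norm_shiftEvo_comp_le hμ (Real.rpow_nonneg (hμ s).le _) hK (hu t s hts) γ

lemma stableBound_of_comp_eq_zero (hμ : ∀ t, 0 < μ t) (hK : 0 ≤ K)
    (h : ∀ t s, Ψ t s ∘L P s = 0) : StableBound μ Ψ P K α θ := fun t s _ => by
  rw [h, norm_zero]
  exact mul_nonneg (mul_nonneg hK (Real.rpow_nonneg (div_pos (hμ t) (hμ s)).le _))
    (Real.rpow_nonneg (hμ s).le _)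

lemma unstableBound_of_comp_eq_zero (hμ : ∀ t, 0 < μ t) (hK : 0 ≤ K)
    (h : ∀ t s, Ψ t s ∘L (1 - P s) = 0) : UnstableBound μ Ψ P K β ν := fun t s _ => by
  rw [h, norm_zero]
  exact mul_nonneg (mul_nonneg hK (Real.rpow_nonneg (div_pos (hμ t) (hμ s)).le _))
    (Real.rpow_nonneg (hμ s).le _)

theorem mem_resolventND_of_bounds (hμ : ∀ t, 0 < μ t) (hP : ∀ t, P t ∘L P t = P t)
    (hinv : IsInvariantFamily Φ P) {K₁ K₂ : ℝ}
    (hs : StableBound μ (shiftEvo μ γ₁ Φ) P K₁ α θ)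
    (hu : UnstableBound μ (shiftEvo μ γ₂ Φ) P K₂ β ν) (hK₁ : 1 ≤ K₁) (hθ : 0 ≤ θ) (hν : 0 ≤ ν)
    (hαθ : α + θ + (γ₁ - γ) < 0) (hβν : 0 < β - ν + (γ₂ - γ)) : γ ∈ resolventND μ Φ :=
  ⟨P, max K₁ K₂, α + (γ₁ - γ), β + (γ₂ - γ), θ, ν, hP,
    (isInvariantFamily_shiftEvo_iff hμ γ).2 hinv, le_max_of_le_left hK₁, by linarith,
    by linarith, hθ, hν, by linarith, by linarith, hs.shift hμ (le_max_left _ _) γ,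
    hu.shift hμ (le_max_right _ _) γ⟩

lemma NuDWith.isInvariantFamily (hμ : ∀ t, 0 < μ t)
    (w : NuDWith μ (shiftEvo μ γ Φ) P K α β θ ν) : IsInvariantFamily Φ P :=
  (isInvariantFamily_shiftEvo_iff hμ γ).1 w.2.1

lemma isOpen_resolventND (hμ : ∀ t, 0 < μ t) : IsOpen (resolventND μ Φ) := by
  refine isOpen_iff_mem_nhds.2 fun γ ⟨P, K, α, β, θ, ν, w⟩ => ?_
  have hinv := w.isInvariantFamily hμ
  obtain ⟨hP, -, hK, -, -, hθ, hν, hαθ, hβν, hs, hu⟩ := w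
  refine Filter.mem_of_superset (Ioo_mem_nhds (a := γ + (α + θ)) (b := γ + (β - ν))
    (by linarith) (by linarith)) fun γ' hγ' => ?_
  exact mem_resolventND_of_bounds hμ hP hinv hs hu hK hθ hν
    (by linarith [hγ'.1]) (by linarith [hγ'.2])

end Resolvent

section StableDim

variable {n : ℕ} {μ : ℝ → ℝ} {Φ : ℝ → ℝ → Op n} {γ₀ γ₁ γ₂ : ℝ}

def stableDim (μ : ℝ → ℝ) (Φ : ℝ → ℝ → Op n) (γ : ℝ) : ℕ :=
  Module.finrank ℝ (stableSubspace (shiftEvo μ γ Φ))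

lemma stableSubspace_shiftEvo_mono (hgr : GrowthRate μ) :
    Monotone fun γ => stableSubspace (shiftEvo μ γ Φ) := fun γ₁ γ₂ h =>
  boundedOrbits_mono fun t (ht : 0 ≤ t) ξ => by
    rw [shiftEvo_eq_smul hgr.pos γ₁, smul_apply, norm_smul,
      Real.norm_of_nonneg (Real.rpow_nonneg (div_pos (hgr.pos t) (hgr.pos 0)).le _)]
    exact mul_le_of_le_one_left (norm_nonneg _)
      (Real.rpow_le_one_of_one_le_of_nonpos (hgr.one_le_div ht) (by linarith))

lemma unstableSubspace_shiftEvo_anti (hgr : GrowthRate μ) :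
    Antitone fun γ => unstableSubspace (shiftEvo μ γ Φ) := fun γ₁ γ₂ h =>
  boundedOrbits_mono fun t (ht : t ≤ 0) ξ => by
    have hq := div_pos (hgr.pos t) (hgr.pos 0)
    rw [shiftEvo_eq_smul hgr.pos γ₂ γ₁, smul_apply, norm_smul,
      Real.norm_of_nonneg (Real.rpow_nonneg hq.le _)]
    exact mul_le_of_le_one_left (norm_nonneg _)
      (Real.rpow_le_one hq.le (hgr.div_le_one ht) (by linarith))

lemma stableDim_mono (hgr : GrowthRate μ) : Monotone (stableDim μ Φ) := fun _ _ h =>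
  Submodule.finrank_mono (stableSubspace_shiftEvo_mono hgr h)

lemma stableDim_le (γ : ℝ) : stableDim μ Φ γ ≤ n :=
  (Submodule.finrank_le _).trans_eq (finrank_euclideanSpace_fin)

lemma Icc_subset_resolventND (hgr : GrowthRate μ) (hΦ : IsEvolutionFamily Φ)
    (h₁ : γ₁ ∈ resolventND μ Φ) (h₂ : γ₂ ∈ resolventND μ Φ)
    (hd : stableDim μ Φ γ₁ = stableDim μ Φ γ₂) : Set.Icc γ₁ γ₂ ⊆ resolventND μ Φ := by
  rintro γ ⟨hγ₁, hγ₂⟩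
  obtain ⟨P₁, K₁, α₁, β₁, θ₁, ν₁, w₁⟩ := h₁
  obtain ⟨P₂, K₂, α₂, β₂, θ₂, ν₂, w₂⟩ := h₂
  have hle := hγ₁.trans hγ₂
  have hU : stableSubspace (shiftEvo μ γ₁ Φ) = stableSubspace (shiftEvo μ γ₂ Φ) :=
    Submodule.eq_of_le_of_finrank_eq (stableSubspace_shiftEvo_mono hgr hle) hd
  have hP0 : P₁ 0 = P₂ 0 :=
    ContinuousLinearMap.IsIdempotentElem.eq_of_range_le_of_ker_le (w₁.1 0) (w₂.1 0)
      (by rw [w₁.range_eq hgr (hΦ.shiftEvo hgr.pos _), w₂.range_eq hgr (hΦ.shiftEvo hgr.pos _), hU])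
      (by rw [w₁.ker_eq hgr (hΦ.shiftEvo hgr.pos _), w₂.ker_eq hgr (hΦ.shiftEvo hgr.pos _)]
          exact unstableSubspace_shiftEvo_anti hgr hle)
  have hinv₁ := w₁.isInvariantFamily hgr.pos
  have hP : P₂ = P₁ :=
    ((hinv₁.eq_of_apply_zero_eq hΦ (w₂.isInvariantFamily hgr.pos)) hP0).symm
  subst hP
  obtain ⟨hP, -, hK₁, -, -, hθ₁, -, hαθ₁, -, hs₁, -⟩ := w₁
  obtain ⟨-, -, -, -, -, -, hν₂, -, hβν₂, -, hu₂⟩ := w₂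
  exact mem_resolventND_of_bounds hgr.pos hP hinv₁ hs₁ hu₂ hK₁ hθ₁ hν₂
    (by linarith) (by linarith)

lemma Iic_subset_resolventND (hgr : GrowthRate μ) (hΦ : IsEvolutionFamily Φ)
    (h₀ : γ₀ ∈ resolventND μ Φ) (hd : stableDim μ Φ γ₀ = 0) :
    Set.Iic γ₀ ⊆ resolventND μ Φ := by
  intro γ (hγ : γ ≤ γ₀)
  obtain ⟨P, K, α, β, θ, ν, w⟩ := h₀
  have hrange : (P 0).range = ⊥ := by
    rw [w.range_eq hgr (hΦ.shiftEvo hgr.pos _)]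
    exact Submodule.finrank_eq_zero.1 hd
  have hP : P = fun _ => 0 :=
    (w.isInvariantFamily hgr.pos).eq_of_apply_zero_eq hΦ (fun _ _ => by simp)
      (ContinuousLinearMap.ext fun x => (Submodule.mem_bot ℝ).1 (hrange ▸ ⟨x, rfl⟩))
  subst hP
  obtain ⟨hP, -, -, -, -, -, hν, -, hβν, -, hu⟩ := w
  exact mem_resolventND_of_bounds (γ₁ := γ) (K₁ := 1) (α := -1) (θ := 0) hgr.pos hP
    (fun _ _ => by simp) (stableBound_of_comp_eq_zero hgr.pos zero_le_one fun _ _ => by simp)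
    hu le_rfl le_rfl hν (by linarith) (by linarith)

lemma Ici_subset_resolventND (hgr : GrowthRate μ) (hΦ : IsEvolutionFamily Φ)
    (h₀ : γ₀ ∈ resolventND μ Φ) (hd : stableDim μ Φ γ₀ = n) :
    Set.Ici γ₀ ⊆ resolventND μ Φ := by
  intro γ (hγ : γ₀ ≤ γ)
  obtain ⟨P, K, α, β, θ, ν, w⟩ := h₀
  have hrange : (P 0).range = ⊤ := by
    rw [w.range_eq hgr (hΦ.shiftEvo hgr.pos _)]
    exact Submodule.eq_top_of_finrank_eq (hd.trans finrank_euclideanSpace_fin.symm)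
  have hP0 : P 0 = 1 :=
    ContinuousLinearMap.IsIdempotentElem.eq_of_range_le_of_ker_le (w.1 0) IsIdempotentElem.one
      (by rw [hrange]; exact le_top) (fun x hx => by simp_all)
  have hP : P = fun _ => 1 :=
    (w.isInvariantFamily hgr.pos).eq_of_apply_zero_eq hΦ
      (fun _ _ => (one_mul _).trans (mul_one _).symm) hP0
  subst hP
  obtain ⟨hP, -, hK, -, -, hθ, -, hαθ, -, hs, -⟩ := w
  exact mem_resolventND_of_bounds (γ₂ := γ) (K₂ := 1) (β := 1) (ν := 0) hgr.pos hP
    (fun _ _ => (one_mul _).trans (mul_one _).symm) hs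
    (unstableBound_of_comp_eq_zero hgr.pos zero_le_one fun _ _ => by simp) hK hθ le_rfl
    (by linarith) (by linarith)

lemma resolventND_eq_univ (hμ : ∀ t, 0 < μ t) (Φ : ℝ → ℝ → Op 0) :
    resolventND μ Φ = Set.univ := by
  have hzero : ∀ f : Op 0, f = 0 :=
    fun f => ContinuousLinearMap.ext fun _ => Subsingleton.elim _ _
  refine Set.eq_univ_of_forall fun γ => ?_
  exact mem_resolventND_of_bounds (P := fun _ => 0) (γ₁ := γ) (γ₂ := γ) (K₁ := 1) (α := -1)
    (θ := 0) (β := 1) (ν := 0) hμ (fun _ => by simp) (fun _ _ => by simp)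
    (stableBound_of_comp_eq_zero hμ zero_le_one fun _ _ => hzero _)
    (unstableBound_of_comp_eq_zero hμ zero_le_one fun _ _ => hzero _) le_rfl le_rfl le_rfl
    (by norm_num) (by norm_num)

end StableDim

theorem exists_fin_ordered_pieces {α : Type*} [LinearOrder α] [TopologicalSpace α] {S : Set α}
    {f : α → ℕ} {n : ℕ} (hf : Monotone f) (hlt : ∀ x ∈ S, f x < n)
    (hclosed : ∀ k, IsClosed (S ∩ f ⁻¹' {k})) (hconn : ∀ k, (S ∩ f ⁻¹' {k}).OrdConnected) :
    ∃ m : ℕ, m ≤ n ∧ ∃ I : Fin m → Set α,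
      (S = ⋃ i, I i) ∧
      (∀ i, IsClosed (I i)) ∧
      (∀ i, (I i).Nonempty) ∧
      (∀ i, (I i).OrdConnected) ∧
      (∀ i j : Fin m, i < j → ∀ x ∈ I i, ∀ y ∈ I j, x < y) ∧
      (∀ i : Fin m, (i : ℕ) ≠ 0 → BddBelow (I i)) ∧
      (∀ i : Fin m, (i : ℕ) ≠ m - 1 → BddAbove (I i)) := by
  classical
  set V := (Finset.range n).filter fun k => (S ∩ f ⁻¹' {k}).Nonempty
  let e := V.orderIsoOfFin rfl
  let I : Fin V.card → Set α := fun i => S ∩ f ⁻¹' {(e i : ℕ)}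
  have hne : ∀ i, (I i).Nonempty := fun i => (Finset.mem_filter.1 (e i).2).2
  have hord : ∀ i j, i < j → ∀ x ∈ I i, ∀ y ∈ I j, x < y := fun i j hij x hx y hy =>
    hf.reflect_lt (by rw [hx.2, hy.2]; exact e.strictMono hij)
  refine ⟨V.card, (Finset.card_filter_le _ _).trans (Finset.card_range n).le, I, ?_,
    fun i => hclosed _, hne, fun i => hconn _, hord, fun i hi => ?_, fun i hi => ?_⟩
  · refine Set.Subset.antisymm (fun x hx => Set.mem_iUnion.2 ?_)
      (Set.iUnion_subset fun i => Set.inter_subset_left)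
    have hV : f x ∈ V := Finset.mem_filter.2 ⟨Finset.mem_range.2 (hlt x hx), x, hx, rfl⟩
    exact ⟨e.symm ⟨f x, hV⟩, hx, by simp⟩
  · obtain ⟨y, hy⟩ := hne ⟨0, i.pos⟩
    exact ⟨y, fun x hx => (hord _ _ (Fin.lt_def.2 (Nat.pos_of_ne_zero hi)) y hy x hx).le⟩
  · obtain ⟨y, hy⟩ := hne ⟨V.card - 1, by omega⟩
    exact ⟨y, fun x hx => (hord _ _ (Fin.lt_def.2 (by simp only; omega)) x hx y hy).le⟩

section LeftDim

variable {α : Type*} [LinearOrder α] {R : Set α} {d : α → ℕ} {n k : ℕ} {x r : α}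

def leftDim (R : Set α) (d : α → ℕ) (x : α) : ℕ :=
  sSup (insert 0 (d '' {r | r ∈ R ∧ r < x}))

lemma bddAbove_leftDim_set (hd : ∀ x, d x ≤ n) (x : α) :
    BddAbove (insert 0 (d '' {r | r ∈ R ∧ r < x})) :=
  ⟨n, by rintro _ (rfl | ⟨r, -, rfl⟩); exacts [Nat.zero_le n, hd r]⟩

lemma leftDim_le_iff (hd : ∀ x, d x ≤ n) : leftDim R d x ≤ k ↔ ∀ r ∈ R, r < x → d r ≤ k := by
  rw [leftDim, csSup_le_iff (bddAbove_leftDim_set hd x) (Set.insert_nonempty _ _),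
    Set.forall_mem_insert, Set.forall_mem_image]
  simp

lemma le_leftDim (hd : ∀ x, d x ≤ n) (hr : r ∈ R) (hrx : r < x) : d r ≤ leftDim R d x :=
  (leftDim_le_iff hd).1 le_rfl r hr hrx

lemma leftDim_mono (hd : ∀ x, d x ≤ n) : Monotone (leftDim R d) := fun _ _ hxy =>
  (leftDim_le_iff hd).2 fun _ hr hrx => le_leftDim hd hr (hrx.trans_le hxy)

lemma leftDim_eq_zero_or (hd : ∀ x, d x ≤ n) (x : α) :
    leftDim R d x = 0 ∨ ∃ r ∈ R, r < x ∧ d r = leftDim R d x := by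
  rcases Nat.sSup_mem (Set.insert_nonempty _ _) (bddAbove_leftDim_set hd x) with
    h | ⟨r, ⟨hr, hrx⟩, h⟩
  exacts [Or.inl h, Or.inr ⟨r, hr, hrx, h⟩]

lemma isClosed_setOf_leftDim_le [TopologicalSpace α] [OrderClosedTopology α]
    (hd : ∀ x, d x ≤ n) (k : ℕ) : IsClosed {x | leftDim R d x ≤ k} := by
  have : {x | leftDim R d x ≤ k} = ⋂ r ∈ {r | r ∈ R ∧ k < d r}, Set.Iic r := by
    ext x
    simp only [Set.mem_ofPred_eq, leftDim_le_iff hd, Set.mem_iInter, Set.mem_Iic, and_imp]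
    exact forall₂_congr fun r _ => by rw [← not_lt, ← not_lt (b := x)]; exact imp_not_comm
  rw [this]
  exact isClosed_biInter fun _ _ => isClosed_Iic

lemma leftDim_lt_of_lt (hmono : Monotone d) (hd : ∀ x, d x ≤ n)
    (h_gap : ∀ a ∈ R, ∀ b ∈ R, d a = d b → Set.Icc a b ⊆ R)
    (h_bot : ∀ a ∈ R, d a = 0 → Set.Iic a ⊆ R) (hx : x ∉ R) (hr : r ∈ R) (hxr : x < r) :
    leftDim R d x < d r := by
  rcases leftDim_eq_zero_or hd x with h0 | ⟨r', hr', hr'x, hdr'⟩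
  · rw [h0]
    exact Nat.pos_of_ne_zero fun h => hx (h_bot r hr h hxr.le)
  · rw [← hdr']
    exact (hmono (hr'x.trans hxr).le).lt_of_ne fun h => hx (h_gap r' hr' r hr h ⟨hr'x.le, hxr.le⟩)

lemma leftDim_lt (hd : ∀ x, d x ≤ n) (h_top : ∀ a ∈ R, d a = n → Set.Ici a ⊆ R)
    (h_univ : n = 0 → R = Set.univ) (hx : x ∉ R) : leftDim R d x < n := by
  rcases leftDim_eq_zero_or hd x with h0 | ⟨r, hr, hrx, hdr⟩
  · rw [h0]
    exact Nat.pos_of_ne_zero fun h => hx (h_univ h ▸ Set.mem_univ x)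
  · rw [← hdr]
    exact (hd r).lt_of_ne fun h => hx (h_top r hr h hrx.le)

lemma ordConnected_leftDim_fiber (hmono : Monotone d) (hd : ∀ x, d x ≤ n)
    (h_gap : ∀ a ∈ R, ∀ b ∈ R, d a = d b → Set.Icc a b ⊆ R)
    (h_bot : ∀ a ∈ R, d a = 0 → Set.Iic a ⊆ R) (k : ℕ) :
    (Rᶜ ∩ leftDim R d ⁻¹' {k}).OrdConnected := by
  refine ⟨fun x ⟨hx, (hfx : _ = k)⟩ y ⟨hy, (hfy : _ = k)⟩ z ⟨hxz, hzy⟩ => ⟨fun hz => ?_, ?_⟩⟩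
  · have hlt :=
      leftDim_lt_of_lt hmono hd h_gap h_bot hx hz (hxz.lt_of_ne (by rintro rfl; exact hx hz))
    have hle := le_leftDim hd hz (hzy.lt_of_ne (by rintro rfl; exact hy hz))
    omega
  · exact le_antisymm (hfy ▸ leftDim_mono hd hzy) (hfx ▸ leftDim_mono hd hxz)

/-- A limit point `x` of the fibre over `k` with `leftDim x < k` is impossible: some `r ∈ R`
with `x < r` has `d r = k`, and fibre points below `r` would have `leftDim < k`. -/
lemma isClosed_leftDim_fiber [TopologicalSpace α] [OrderClosedTopology α] (hR : IsOpen R)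
    (hmono : Monotone d) (hd : ∀ x, d x ≤ n)
    (h_gap : ∀ a ∈ R, ∀ b ∈ R, d a = d b → Set.Icc a b ⊆ R)
    (h_bot : ∀ a ∈ R, d a = 0 → Set.Iic a ⊆ R) (k : ℕ) :
    IsClosed (Rᶜ ∩ leftDim R d ⁻¹' {k}) := by
  refine isClosed_of_closure_subset fun x hx => ?_
  have hxR : x ∉ R := hR.isClosed_compl.closure_subset (closure_mono Set.inter_subset_left hx)
  have hfx : leftDim R d x ≤ k := (isClosed_setOf_leftDim_le hd k).closure_subset
    (closure_mono (fun y (hy : _ ∧ _ = k) => hy.2.le) hx)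
  refine ⟨hxR, hfx.antisymm (not_lt.1 fun hlt => ?_)⟩
  obtain ⟨y, -, (hfy : _ = k)⟩ := closure_nonempty_iff.1 ⟨x, hx⟩
  have hy0 : leftDim R d y ≠ 0 := by omega
  obtain ⟨r, hr, -, hdr⟩ := (leftDim_eq_zero_or hd y).resolve_left hy0
  have hxr : x < r := lt_of_not_ge fun hrx =>
    (le_leftDim hd hr (hrx.lt_of_ne (by rintro rfl; exact hxR hr))).not_gt (by omega)
  obtain ⟨y', hy'r, hy'R, (hfy' : _ = k)⟩ := mem_closure_iff_nhds.1 hx _ (Iio_mem_nhds hxr)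
  have := leftDim_lt_of_lt hmono hd h_gap h_bot hy'R hr hy'r
  omega

end LeftDim

theorem exists_ordered_intervals_compl {α : Type*} [LinearOrder α] [TopologicalSpace α]
    [OrderClosedTopology α] {R : Set α} {d : α → ℕ} {n : ℕ} (hR : IsOpen R)
    (hmono : Monotone d) (hd : ∀ x, d x ≤ n)
    (h_gap : ∀ a ∈ R, ∀ b ∈ R, d a = d b → Set.Icc a b ⊆ R)
    (h_bot : ∀ a ∈ R, d a = 0 → Set.Iic a ⊆ R) (h_top : ∀ a ∈ R, d a = n → Set.Ici a ⊆ R)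
    (h_univ : n = 0 → R = Set.univ) :
    ∃ m : ℕ, m ≤ n ∧ ∃ I : Fin m → Set α,
      (Rᶜ = ⋃ i, I i) ∧
      (∀ i, IsClosed (I i)) ∧
      (∀ i, (I i).Nonempty) ∧
      (∀ i, (I i).OrdConnected) ∧
      (∀ i j : Fin m, i < j → ∀ x ∈ I i, ∀ y ∈ I j, x < y) ∧
      (∀ i : Fin m, (i : ℕ) ≠ 0 → BddBelow (I i)) ∧
      (∀ i : Fin m, (i : ℕ) ≠ m - 1 → BddAbove (I i)) :=
  exists_fin_ordered_pieces (leftDim_mono hd) (fun _ hx => leftDim_lt hd h_top h_univ hx)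
    (isClosed_leftDim_fiber hR hmono hd h_gap h_bot)
    (ordConnected_leftDim_fiber hmono hd h_gap h_bot)

theorem stmt11_general (n : ℕ) (A : ℝ → Op n)
    (Φ : ℝ → ℝ → Op n) (hΦ : IsEvolutionOp A Φ)
    (μ : ℝ → ℝ) (hgr : GrowthRate μ) :
    ∃ m : ℕ, m ≤ n ∧ ∃ I : Fin m → Set ℝ,
      (spectrumND μ Φ = ⋃ i, I i) ∧
      (∀ i, IsClosed (I i)) ∧
      (∀ i, (I i).Nonempty) ∧
      (∀ i, (I i).OrdConnected) ∧
      (∀ i j : Fin m, i < j → ∀ x ∈ I i, ∀ y ∈ I j, x < y) ∧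
      (∀ i : Fin m, (i : ℕ) ≠ 0 → BddBelow (I i)) ∧
      (∀ i : Fin m, (i : ℕ) ≠ m - 1 → BddAbove (I i)) := by
  have hΦ' := hΦ.isEvolutionFamily
  exact exists_ordered_intervals_compl (isOpen_resolventND hgr.pos) (stableDim_mono hgr)
    stableDim_le (fun _ ha _ hb hd => Icc_subset_resolventND hgr hΦ' ha hb hd)
    (fun _ ha hd => Iic_subset_resolventND hgr hΦ' ha hd)
    (fun _ ha hd => Ici_subset_resolventND hgr hΦ' ha hd)
    (fun hn => by subst hn; exact resolventND_eq_univ hgr.pos Φ)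

/-- the nonuniform μ-dichotomy spectrum is the union of m ≤ n disjoint
nonempty closed intervals, ordered, all bounded except possibly the first one below
and the last one above. -/
theorem stmt11 (n : ℕ) (A : ℝ → Op n) (hA : Continuous A)
    (Φ : ℝ → ℝ → Op n) (hΦ : IsEvolutionOp A Φ)
    (μ : ℝ → ℝ) (hgr : GrowthRate μ) (hdiff : Differentiable ℝ μ) :
    ∃ m : ℕ, m ≤ n ∧ ∃ I : Fin m → Set ℝ,
      (spectrumND μ Φ = ⋃ i, I i) ∧
      (∀ i, IsClosed (I i)) ∧
      (∀ i, (I i).Nonempty) ∧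
      (∀ i, (I i).OrdConnected) ∧
      (∀ i j : Fin m, i < j → ∀ x ∈ I i, ∀ y ∈ I j, x < y) ∧
      (∀ i : Fin m, (i : ℕ) ≠ 0 → BddBelow (I i)) ∧
      (∀ i : Fin m, (i : ℕ) ≠ m - 1 → BddAbove (I i)) :=
  stmt11_general n A Φ hΦ μ hgr
end
end

section
/- If the evolution operator Φ of x' = A(t)x has nonuniformly bounded growth with respect to (μ,ε), i.e. ‖Φ(t,s)‖ ≤ K (μ(t)/μ(s))^{sign(t−s)a} μ(s)^{sign(s)ε} for all t,s ∈ ℝ with some K ≥ 1, a ≥ 0, ε ≥ 0, then the nonuniform μ-dichotomy spectrum satisfies Σ^{ND}_μ(A) ⊆ [−a−ε, a+ε]; in particular Σ^{ND}_μ(A) is bounded. -/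
open Filter Topology

noncomputable section

/-!
Shifting by γ multiplies Φ(t,s) by (μ(t)/μ(s))^{-γ}. For γ > a + ε the bounded-growth estimate
for t ≥ s then becomes a nonuniform contraction with rate a - γ and nonuniformity ε, so the
trivial projection P = 1 gives a dichotomy; symmetrically, for γ < -(a + ε) the estimate for
t ≤ s is a nonuniform expansion and P = 0 works. Hence every γ outside [-a-ε, a+ε] is in the
resolvent set.
-/

def HasNonuniformBoundedGrowth {n : ℕ} (μ : ℝ → ℝ) (Φ : ℝ → ℝ → Op n) (K a ε : ℝ) : Prop :=
  ∀ t s : ℝ, ‖Φ t s‖ ≤ K * (μ t / μ s) ^ (Real.sign (t - s) * a) * μ s ^ (Real.sign s * ε)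

section Dichotomy

variable {n : ℕ} {μ : ℝ → ℝ} {Ψ : ℝ → ℝ → Op n} {K α β θ ν : ℝ}

theorem nuDWith_one_of_contracting (hμ : ∀ t, 0 ≤ μ t) (hK : 1 ≤ K) (hθ : 0 ≤ θ)
    (hαθ : α + θ < 0)
    (hΨ : ∀ t s, s ≤ t → ‖Ψ t s‖ ≤ K * (μ t / μ s) ^ α * μ s ^ (Real.sign s * θ)) :
    NuDWith μ Ψ 1 K α 1 θ 0 := by
  refine ⟨fun _ => by simp [ContinuousLinearMap.one_def],
    fun _ _ => by simp [ContinuousLinearMap.one_def], hK, by linarith, one_pos, hθ, le_rfl, hαθ,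
    by norm_num,
    fun t s hst => by simpa [ContinuousLinearMap.one_def] using hΨ t s hst, fun t s _ => ?_⟩
  have := hμ t
  have := hμ s
  simp only [Pi.one_apply, sub_self, ContinuousLinearMap.comp_zero, norm_zero]
  positivity

theorem nuDWith_zero_of_expanding (hμ : ∀ t, 0 ≤ μ t) (hK : 1 ≤ K) (hν : 0 ≤ ν)
    (hβν : 0 < β - ν)
    (hΨ : ∀ t s, t ≤ s → ‖Ψ t s‖ ≤ K * (μ t / μ s) ^ β * μ s ^ (Real.sign s * ν)) :
    NuDWith μ Ψ 0 K (-1) β 0 ν := by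
  refine ⟨fun _ => by simp, fun _ _ => by simp, hK, by norm_num, by linarith, le_rfl, hν,
    by norm_num, hβν, fun t s _ => ?_,
    fun t s hts => by simpa [ContinuousLinearMap.one_def] using hΨ t s hts⟩
  have := hμ t
  have := hμ s
  simp only [Pi.zero_apply, ContinuousLinearMap.comp_zero, norm_zero]
  positivity

end Dichotomy

section BoundedGrowth

variable {n : ℕ} {μ : ℝ → ℝ} {Φ : ℝ → ℝ → Op n} {K a ε γ : ℝ}

theorem norm_shiftEvo (hμ : ∀ t, 0 ≤ μ t) (t s : ℝ) :
    ‖shiftEvo μ γ Φ t s‖ = (μ t / μ s) ^ (-γ) * ‖Φ t s‖ := by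
  rw [shiftEvo, norm_smul, Real.norm_of_nonneg (Real.rpow_nonneg (div_nonneg (hμ t) (hμ s)) _)]

theorem div_rpow_sign_sub_mul_of_le (hμ : ∀ t, 0 < μ t) {t s : ℝ} (hst : s ≤ t) :
    (μ t / μ s) ^ (Real.sign (t - s) * a) = (μ t / μ s) ^ a := by
  rcases hst.eq_or_lt with rfl | hst
  · simp [div_self (hμ s).ne']
  · rw [Real.sign_of_pos (sub_pos.mpr hst), one_mul]

theorem div_rpow_sign_sub_mul_of_ge (hμ : ∀ t, 0 < μ t) {t s : ℝ} (hts : t ≤ s) :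
    (μ t / μ s) ^ (Real.sign (t - s) * a) = (μ t / μ s) ^ (-a) := by
  rcases hts.eq_or_lt with rfl | hts
  · simp [div_self (hμ t).ne']
  · rw [Real.sign_of_neg (sub_neg.mpr hts), neg_one_mul]

namespace HasNonuniformBoundedGrowth

variable (hbg : HasNonuniformBoundedGrowth μ Φ K a ε) (hμ : ∀ t, 0 < μ t)
include hbg hμ

theorem norm_shiftEvo_le_of_le {t s : ℝ} (hst : s ≤ t) :
    ‖shiftEvo μ γ Φ t s‖ ≤ K * (μ t / μ s) ^ (a - γ) * μ s ^ (Real.sign s * ε) := by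
  have hx : 0 < μ t / μ s := div_pos (hμ t) (hμ s)
  calc ‖shiftEvo μ γ Φ t s‖ = (μ t / μ s) ^ (-γ) * ‖Φ t s‖ :=
        norm_shiftEvo (fun r => (hμ r).le) t s
    _ ≤ (μ t / μ s) ^ (-γ) * (K * (μ t / μ s) ^ a * μ s ^ (Real.sign s * ε)) := by
      rw [← div_rpow_sign_sub_mul_of_le (a := a) hμ hst]
      exact mul_le_mul_of_nonneg_left (hbg t s) (Real.rpow_nonneg hx.le _)
    _ = K * (μ t / μ s) ^ (a - γ) * μ s ^ (Real.sign s * ε) := by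
      rw [sub_eq_add_neg, Real.rpow_add hx]
      ring

theorem norm_shiftEvo_le_of_ge {t s : ℝ} (hts : t ≤ s) :
    ‖shiftEvo μ γ Φ t s‖ ≤ K * (μ t / μ s) ^ (-γ - a) * μ s ^ (Real.sign s * ε) := by
  have hx : 0 < μ t / μ s := div_pos (hμ t) (hμ s)
  calc ‖shiftEvo μ γ Φ t s‖ = (μ t / μ s) ^ (-γ) * ‖Φ t s‖ :=
        norm_shiftEvo (fun r => (hμ r).le) t s
    _ ≤ (μ t / μ s) ^ (-γ) * (K * (μ t / μ s) ^ (-a) * μ s ^ (Real.sign s * ε)) := by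
      rw [← div_rpow_sign_sub_mul_of_ge (a := a) hμ hts]
      exact mul_le_mul_of_nonneg_left (hbg t s) (Real.rpow_nonneg hx.le _)
    _ = K * (μ t / μ s) ^ (-γ - a) * μ s ^ (Real.sign s * ε) := by
      rw [sub_eq_add_neg, Real.rpow_add hx]
      ring

theorem mem_resolventND_of_lt (hK : 1 ≤ K) (hε : 0 ≤ ε) (hγ : a + ε < γ) :
    γ ∈ resolventND μ Φ :=
  ⟨1, K, a - γ, 1, ε, 0, nuDWith_one_of_contracting (fun t => (hμ t).le) hK hε (by linarith)
    fun _ _ hst => hbg.norm_shiftEvo_le_of_le hμ hst⟩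

theorem mem_resolventND_of_lt_neg (hK : 1 ≤ K) (hε : 0 ≤ ε) (hγ : γ < -(a + ε)) :
    γ ∈ resolventND μ Φ :=
  ⟨0, K, -1, -γ - a, 0, ε, nuDWith_zero_of_expanding (fun t => (hμ t).le) hK hε (by linarith)
    fun _ _ hts => hbg.norm_shiftEvo_le_of_ge hμ hts⟩

end HasNonuniformBoundedGrowth

end BoundedGrowth

theorem stmt13_general (n : ℕ) (Φ : ℝ → ℝ → Op n) (μ : ℝ → ℝ) (hgr : GrowthRate μ) (K a ε : ℝ)
    (hK : 1 ≤ K) (hε : 0 ≤ ε) (hbg : ∀ t s : ℝ, ‖Φ t s‖ ≤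
      K * (μ t / μ s) ^ (Real.sign (t - s) * a) * μ s ^ (Real.sign s * ε)) :
    spectrumND μ Φ ⊆ Set.Icc (-(a + ε)) (a + ε) ∧
    Bornology.IsBounded (spectrumND μ Φ) := by
  have hbg' : HasNonuniformBoundedGrowth μ Φ K a ε := hbg
  have hsub : spectrumND μ Φ ⊆ Set.Icc (-(a + ε)) (a + ε) := by
    intro γ hγ
    by_contra hγ'
    rcases not_and_or.mp hγ' with hlow | hhigh
    · exact hγ (hbg'.mem_resolventND_of_lt_neg hgr.2.1 hK hε (not_le.mp hlow))
    · exact hγ (hbg'.mem_resolventND_of_lt hgr.2.1 hK hε (not_le.mp hhigh))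
  exact ⟨hsub, (Metric.isBounded_Icc _ _).subset hsub⟩

/-- nonuniformly bounded growth w.r.t. (μ,ε) implies
Σ^{ND}_μ(A) ⊆ [-a-ε, a+ε]; in particular the spectrum is bounded. -/
theorem stmt13 (n : ℕ) (A : ℝ → Op n) (hA : Continuous A)
    (Φ : ℝ → ℝ → Op n) (hΦ : IsEvolutionOp A Φ)
    (μ : ℝ → ℝ) (hgr : GrowthRate μ) (hdiff : Differentiable ℝ μ)
    (K a ε : ℝ) (hK : 1 ≤ K) (ha : 0 ≤ a) (hε : 0 ≤ ε)
    (hbg : ∀ t s : ℝ, ‖Φ t s‖ ≤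
      K * (μ t / μ s) ^ (Real.sign (t - s) * a) * μ s ^ (Real.sign s * ε)) :
    spectrumND μ Φ ⊆ Set.Icc (-(a + ε)) (a + ε) ∧
    Bornology.IsBounded (spectrumND μ Φ) :=
  stmt13_general n Φ μ hgr K a ε hK hε hbg
end
end
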